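/- Fix n ≥ 1 and h ∈ ℤ^n, and set ν = (h_1, …, h_n, −(h_1 + ⋯ + h_n)) ∈ ℤ^{n+1}. Let Ψ : T(h) → A(ν) be the bijection sending a Tesler matrix A = (a_{ij}) to the Lusztig datum a with a_{i,j−1} = A_{ij} for 1 ≤ i < j ≤ n and a_{i,n} = A_{ii} for 1 ≤ i ≤ n. Then for all B, A ∈ T(h): if B ≤ A in the Tesler poset, then Ψ(B) ≤ Ψ(A) in the two-sided dictionary order; i.e., the two-sided dictionary order on A(ν) refines the Tesler poset on T(h). -/
import Mathlib


open Filter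

/-- The positive root `α_{ij} = e_i − e_{j+1}` of type `A_n` (indices `0`-based,
so `i j : Fin n` and the root lives in `ℤ^{n+1}`). -/
def posRoot (n : ℕ) (i j : Fin n) : Fin (n + 1) → ℤ := fun t =>
  (if (t : ℕ) = (i : ℕ) then 1 else 0) - (if (t : ℕ) = (j : ℕ) + 1 then 1 else 0)

/-- A Lusztig datum for `ν`: nonnegative integers `a i j` for pairs `i ≤ j`
(zero for `j < i`) with `∑ a_{ij} α_{ij} = ν`. -/
def IsLusztig {n : ℕ} (ν : Fin (n + 1) → ℤ) (a : Fin n → Fin n → ℕ) : Prop :=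
  (∀ i j : Fin n, j < i → a i j = 0) ∧
  ∀ t : Fin (n + 1), (∑ i : Fin n, ∑ j : Fin n, (a i j : ℤ) * posRoot n i j t) = ν t

/-- Merge covering relation on Lusztig data: `b` is covered by `a` iff they agree
except `b i j = a i j − 1`, `b (j+1) k = a (j+1) k − 1`, `b i k = a i k + 1` for a
single triple `i ≤ j < k`. -/
def MergeCover {n : ℕ} (b a : Fin n → Fin n → ℕ) : Prop :=
  ∃ (i j k : ℕ) (hi : i < n) (hj : j < n) (hj1 : j + 1 < n) (hk : k < n),
    i ≤ j ∧ j < k ∧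
    b ⟨i, hi⟩ ⟨j, hj⟩ + 1 = a ⟨i, hi⟩ ⟨j, hj⟩ ∧
    b ⟨j + 1, hj1⟩ ⟨k, hk⟩ + 1 = a ⟨j + 1, hj1⟩ ⟨k, hk⟩ ∧
    b ⟨i, hi⟩ ⟨k, hk⟩ = a ⟨i, hi⟩ ⟨k, hk⟩ + 1 ∧
    ∀ p q : Fin n, ((p : ℕ), (q : ℕ)) ≠ (i, j) → ((p : ℕ), (q : ℕ)) ≠ (j + 1, k) →
      ((p : ℕ), (q : ℕ)) ≠ (i, k) → b p q = a p q

/-- Strict order on positions `(i,j)`, `i ≤ j`, in the standard reading order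
`a_{11}, a_{12}, …, a_{1n}, a_{22}, …`: lexicographic. -/
def PosLt {n : ℕ} (p q : Fin n × Fin n) : Prop :=
  p.1 < q.1 ∨ (p.1 = q.1 ∧ p.2 < q.2)

/-- Two-sided dictionary order on Lusztig data: `a ≤ a'` iff `a = a'` or there are
positions `l ≤ r` with `a'_l > a_l`, `a'_r > a_r`, and `a'_i = a_i` for all positions
`i < l` and all positions `i > r`. -/
def DictLE {n : ℕ} (a a' : Fin n → Fin n → ℕ) : Prop :=
  a = a' ∨ ∃ l r : Fin n × Fin n, l.1 ≤ l.2 ∧ r.1 ≤ r.2 ∧ (PosLt l r ∨ l = r) ∧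
    a l.1 l.2 < a' l.1 l.2 ∧ a r.1 r.2 < a' r.1 r.2 ∧
    (∀ p : Fin n × Fin n, p.1 ≤ p.2 → PosLt p l → a p.1 p.2 = a' p.1 p.2) ∧
    (∀ p : Fin n × Fin n, p.1 ≤ p.2 → PosLt r p → a p.1 p.2 = a' p.1 p.2)

/-- A generalized Tesler matrix with hook sum vector `h`. -/
def IsTesler {n : ℕ} (h : Fin n → ℤ) (A : Fin n → Fin n → ℕ) : Prop :=
  (∀ i j : Fin n, j < i → A i j = 0) ∧
  ∀ k : Fin n, (∑ i : Fin n, if k ≤ i then (A k i : ℤ) else 0)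
    - (∑ i : Fin n, if i < k then (A i k : ℤ) else 0) = h k

/-- Covering relation on Tesler matrices: `a` covers `b` iff they agree except
`a i j = b i j + 1`, `a j k = b j k + 1`, `a i k = b i k − 1` for a single triple
`i < j < k`, or `a i j = b i j + 1`, `a j j = b j j + 1`, `a i i = b i i − 1` for a
single pair `i < j`. -/
def TeslerCover {n : ℕ} (b a : Fin n → Fin n → ℕ) : Prop :=
  (∃ i j k : Fin n, i < j ∧ j < k ∧
    a i j = b i j + 1 ∧ a j k = b j k + 1 ∧ a i k + 1 = b i k ∧
    ∀ p q : Fin n, (p, q) ≠ (i, j) → (p, q) ≠ (j, k) → (p, q) ≠ (i, k) →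
      a p q = b p q) ∨
  (∃ i j : Fin n, i < j ∧
    a i j = b i j + 1 ∧ a j j = b j j + 1 ∧ a i i + 1 = b i i ∧
    ∀ p q : Fin n, (p, q) ≠ (i, j) → (p, q) ≠ (j, j) → (p, q) ≠ (i, i) →
      a p q = b p q)

/-- The bijection `Ψ : T(h) → A(ν)` sending a Tesler matrix `A` to the Lusztig datum
`a` with `a_{i,j−1} = A_{ij}` for `i < j ≤ n` and `a_{i,n} = A_{ii}` (0-based here). -/
def tesToLus {n : ℕ} (A : Fin n → Fin n → ℕ) : Fin n → Fin n → ℕ := fun i j =>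
  if i ≤ j then (if hj : (j : ℕ) + 1 < n then A i ⟨(j : ℕ) + 1, hj⟩ else A i i) else 0

lemma posLt_iff {n : ℕ} (p q : Fin n × Fin n) : PosLt p q ↔ toLex p < toLex q := by
  rw [Prod.Lex.lt_iff]; rfl

lemma dict_trans {n : ℕ} {a b c : Fin n → Fin n → ℕ}
    (h1 : DictLE a b) (h2 : DictLE b c) : DictLE a c := by
  rcases h1 with rfl | ⟨l, r, hl, hr, hlr, hal, har, hbef, haft⟩
  · exact h2
  rcases h2 with rfl | ⟨l', r', hl', hr', hlr', hal', har', hbef', haft'⟩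
  · exact Or.inr ⟨l, r, hl, hr, hlr, hal, har, hbef, haft⟩
  set L := if toLex l ≤ toLex l' then l else l' with hL
  set R := if toLex r' ≤ toLex r then r else r' with hR
  have hLl : toLex L ≤ toLex l := by
    rw [hL]; split
    · exact le_refl _
    · exact (lt_of_not_ge (by assumption)).le
  have hLl' : toLex L ≤ toLex l' := by
    rw [hL]; split
    · assumption
    · exact le_refl _
  have hRr : toLex r ≤ toLex R := by
    rw [hR]; split
    · exact le_refl _
    · exact (lt_of_not_ge (by assumption)).le
  have hRr' : toLex r' ≤ toLex R := by
    rw [hR]; split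
    · assumption
    · exact le_refl _
  have hlr_le : toLex l ≤ toLex r := by
    rcases hlr with h | h
    · exact ((posLt_iff _ _).mp h).le
    · rw [h]
  refine Or.inr ⟨L, R, ?_, ?_, ?_, ?_, ?_, ?_, ?_⟩
  · rw [hL]; split
    · exact hl
    · exact hl'
  · rw [hR]; split
    · exact hr
    · exact hr'
  · rcases lt_or_eq_of_le (le_trans hLl (le_trans hlr_le hRr)) with h | h
    · exact Or.inl ((posLt_iff _ _).mpr h)
    · exact Or.inr (toLex.injective h)
  · -- a L < c L
    rw [hL]; split
    · rename_i hc
      rcases lt_or_eq_of_le hc with hlt | heq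
      · have : b l.1 l.2 = c l.1 l.2 := hbef' l hl ((posLt_iff _ _).mpr hlt)
        omega
      · have : l = l' := toLex.injective heq
        subst this; omega
    · rename_i hc
      have hlt : toLex l' < toLex l := lt_of_not_ge hc
      have : a l'.1 l'.2 = b l'.1 l'.2 := hbef l' hl' ((posLt_iff _ _).mpr hlt)
      omega
  · -- a R < c R
    rw [hR]; split
    · rename_i hc
      rcases lt_or_eq_of_le hc with hlt | heq
      · have : b r.1 r.2 = c r.1 r.2 := haft' r hr ((posLt_iff _ _).mpr hlt)
        omega
      · have : r' = r := toLex.injective heq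
        subst this; omega
    · rename_i hc
      have hlt : toLex r < toLex r' := lt_of_not_ge hc
      have : a r'.1 r'.2 = b r'.1 r'.2 := haft r' hr' ((posLt_iff _ _).mpr hlt)
      omega
  · intro p hp hplt
    have hp1 : toLex p < toLex l := lt_of_lt_of_le ((posLt_iff _ _).mp hplt) hLl
    have hp2 : toLex p < toLex l' := lt_of_lt_of_le ((posLt_iff _ _).mp hplt) hLl'
    rw [hbef p hp ((posLt_iff _ _).mpr hp1), hbef' p hp ((posLt_iff _ _).mpr hp2)]
  · intro p hp hplt
    have hp1 : toLex r < toLex p := lt_of_le_of_lt hRr ((posLt_iff _ _).mp hplt)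
    have hp2 : toLex r' < toLex p := lt_of_le_of_lt hRr' ((posLt_iff _ _).mp hplt)
    rw [haft p hp ((posLt_iff _ _).mpr hp1), haft' p hp ((posLt_iff _ _).mpr hp2)]

lemma tesToLus_off {n : ℕ} (X : Fin n → Fin n → ℕ) (i j' j : Fin n)
    (hij : i ≤ j') (hj : (j : ℕ) = (j' : ℕ) + 1) : tesToLus X i j' = X i j := by
  have h1 : (j' : ℕ) + 1 < n := hj ▸ j.isLt
  simp only [tesToLus, if_pos hij, dif_pos h1]
  congr 1
  exact Fin.ext hj.symm

lemma tesToLus_diag {n : ℕ} (X : Fin n → Fin n → ℕ) (i j' : Fin n)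
    (hij : i ≤ j') (hj : (j' : ℕ) + 1 = n) : tesToLus X i j' = X i i := by
  have hne : ¬((j' : ℕ) + 1 < n) := by omega
  simp only [tesToLus, if_pos hij, dif_neg hne]

lemma cover_dict {n : ℕ} {b a : Fin n → Fin n → ℕ} (hc : TeslerCover b a) :
    DictLE (tesToLus b) (tesToLus a) := by
  rcases hc with ⟨i, j, k, hij, hjk, e1, e2, e3, hagree⟩ | ⟨i, j, hij, e1, e2, e3, hagree⟩
  · -- off-diagonal move, i < j < k
    have hij' : (i : ℕ) < j := hij
    have hjk' : (j : ℕ) < k := hjk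
    have hkn : (k : ℕ) < n := k.isLt
    set j' : Fin n := ⟨(j : ℕ) - 1, by omega⟩ with hj'
    set k' : Fin n := ⟨(k : ℕ) - 1, by omega⟩ with hk'
    have hjj' : (j : ℕ) = (j' : ℕ) + 1 := by simp [hj']; omega
    have hkk' : (k : ℕ) = (k' : ℕ) + 1 := by simp [hk']; omega
    have hil : i ≤ j' := by rw [Fin.le_def]; simp [hj']; omega
    have hjr : j ≤ k' := by rw [Fin.le_def]; simp [hk']; omega
    -- general agreement
    have key : ∀ p1 p2 : Fin n, p1 ≤ p2 →
        ¬((p1 : ℕ) = i ∧ (p2 : ℕ) + 1 = j) → ¬((p1 : ℕ) = j ∧ (p2 : ℕ) + 1 = k) →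
        ¬((p1 : ℕ) = i ∧ (p2 : ℕ) + 1 = k) →
        tesToLus b p1 p2 = tesToLus a p1 p2 := by
      intro p1 p2 hle h1 h2 h3
      simp only [tesToLus, if_pos hle]
      split
      · rename_i hlt
        refine (hagree p1 ⟨(p2 : ℕ) + 1, hlt⟩ ?_ ?_ ?_).symm <;>
          · intro heq
            simp only [Prod.mk.injEq, Fin.ext_iff] at heq
            omega
      · refine (hagree p1 p1 ?_ ?_ ?_).symm <;>
          · intro heq
            simp only [Prod.mk.injEq, Fin.ext_iff] at heq
            omega
    refine Or.inr ⟨(i, j'), (j, k'), hil, hjr, Or.inl (Or.inl hij), ?_, ?_, ?_, ?_⟩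
    · rw [tesToLus_off b i j' j hil hjj', tesToLus_off a i j' j hil hjj']; omega
    · rw [tesToLus_off b j k' k hjr hkk', tesToLus_off a j k' k hjr hkk']; omega
    · intro p hp hplt
      have hple : (p.1 : ℕ) ≤ (p.2 : ℕ) := hp
      have hnat : (p.1 : ℕ) < (i : ℕ) ∨ ((p.1 : ℕ) = (i : ℕ) ∧ (p.2 : ℕ) < (j : ℕ) - 1) := by
        rcases hplt with hlt | ⟨heq, hlt⟩
        · exact Or.inl hlt
        · exact Or.inr ⟨Fin.ext_iff.mp heq, hlt⟩
      apply key p.1 p.2 hp <;> omega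
    · intro p hp hplt
      have hple : (p.1 : ℕ) ≤ (p.2 : ℕ) := hp
      have hnat : (j : ℕ) < (p.1 : ℕ) ∨ ((j : ℕ) = (p.1 : ℕ) ∧ (k : ℕ) - 1 < (p.2 : ℕ)) := by
        rcases hplt with hlt | ⟨heq, hlt⟩
        · exact Or.inl hlt
        · exact Or.inr ⟨Fin.ext_iff.mp heq, hlt⟩
      apply key p.1 p.2 hp <;> omega
  · -- diagonal move, i < j
    have hij' : (i : ℕ) < j := hij
    have hjn : (j : ℕ) < n := j.isLt
    set j' : Fin n := ⟨(j : ℕ) - 1, by omega⟩ with hj'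
    set lst : Fin n := ⟨n - 1, by omega⟩ with hlst
    have hjj' : (j : ℕ) = (j' : ℕ) + 1 := by simp [hj']; omega
    have hil : i ≤ j' := by rw [Fin.le_def]; simp [hj']; omega
    have hjr : j ≤ lst := by rw [Fin.le_def]; simp [hlst]; omega
    have hlstn : (lst : ℕ) + 1 = n := by simp [hlst]; omega
    have key : ∀ p1 p2 : Fin n, p1 ≤ p2 →
        ¬((p1 : ℕ) = i ∧ (p2 : ℕ) + 1 = j) → ¬((p1 : ℕ) = j ∧ (p2 : ℕ) + 1 = n) →
        ¬((p1 : ℕ) = i ∧ (p2 : ℕ) + 1 = n) →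
        tesToLus b p1 p2 = tesToLus a p1 p2 := by
      intro p1 p2 hle h1 h2 h3
      have hle' : (p1 : ℕ) ≤ p2 := hle
      have hp2 : (p2 : ℕ) < n := p2.isLt
      simp only [tesToLus, if_pos hle]
      split
      · rename_i hlt
        refine (hagree p1 ⟨(p2 : ℕ) + 1, hlt⟩ ?_ ?_ ?_).symm <;>
          · intro heq
            simp only [Prod.mk.injEq, Fin.ext_iff] at heq
            omega
      · rename_i hlt
        refine (hagree p1 p1 ?_ ?_ ?_).symm <;>
          · intro heq
            simp only [Prod.mk.injEq, Fin.ext_iff] at heq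
            omega
    refine Or.inr ⟨(i, j'), (j, lst), hil, hjr, Or.inl (Or.inl hij), ?_, ?_, ?_, ?_⟩
    · rw [tesToLus_off b i j' j hil hjj', tesToLus_off a i j' j hil hjj']; omega
    · rw [tesToLus_diag b j lst hjr hlstn, tesToLus_diag a j lst hjr hlstn]; omega
    · intro p hp hplt
      have hple : (p.1 : ℕ) ≤ (p.2 : ℕ) := hp
      have hp2n : (p.2 : ℕ) < n := p.2.isLt
      have hnat : (p.1 : ℕ) < (i : ℕ) ∨ ((p.1 : ℕ) = (i : ℕ) ∧ (p.2 : ℕ) < (j : ℕ) - 1) := by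
        rcases hplt with hlt | ⟨heq, hlt⟩
        · exact Or.inl hlt
        · exact Or.inr ⟨Fin.ext_iff.mp heq, hlt⟩
      apply key p.1 p.2 hp <;> omega
    · intro p hp hplt
      have hple : (p.1 : ℕ) ≤ (p.2 : ℕ) := hp
      have hp2n : (p.2 : ℕ) < n := p.2.isLt
      have hnat : (j : ℕ) < (p.1 : ℕ) ∨ ((j : ℕ) = (p.1 : ℕ) ∧ n - 1 < (p.2 : ℕ)) := by
        rcases hplt with hlt | ⟨heq, hlt⟩
        · exact Or.inl hlt
        · exact Or.inr ⟨Fin.ext_iff.mp heq, hlt⟩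
      apply key p.1 p.2 hp <;> omega

/-- The two-sided dictionary order on `A(ν)` refines the Tesler poset on `T(h)`. -/
theorem dict_refines_tesler {n : ℕ} (hn : 1 ≤ n) (h : Fin n → ℤ)
    (A B : Fin n → Fin n → ℕ) (hA : IsTesler h A) (hB : IsTesler h B)
    (hle : Relation.ReflTransGen TeslerCover B A) :
    DictLE (tesToLus B) (tesToLus A) := by
  clear hA hB
  induction hle with
  | refl => exact Or.inl rfl
  | tail _ hstep ih => exact dict_trans ih (cover_dict hstep)
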